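/- arXiv:1412.2360 — 7 statements merged into one kernel-verified Lean document; each statement's English description precedes it below -/
import Mathlib

section
/- For any commutative ring R, any n : ℕ, and any three derivations D, E, F of the polynomial algebra A = MvPolynomial (Fin n) R, the product ⋆ satisfies the left-symmetric identity: (D ⋆ E) ⋆ F - D ⋆ (E ⋆ F) = (E ⋆ D) ⋆ F - E ⋆ (D ⋆ F). -/
/-- The left-symmetric product on derivations of `MvPolynomial (Fin n) R`:
`D ⋆ E` is the unique derivation with `(D ⋆ E) (X i) = D (E (X i))`. -/
noncomputable def lsmul {R : Type*} [CommRing R] {n : ℕ}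
    (D E : Derivation R (MvPolynomial (Fin n) R) (MvPolynomial (Fin n) R)) :
    Derivation R (MvPolynomial (Fin n) R) (MvPolynomial (Fin n) R) :=
  MvPolynomial.mkDerivation R (fun i => D (E (MvPolynomial.X i)))

lemma lsmul_sub_lsmul_eq {R : Type*} [CommRing R] {n : ℕ}
    (D E : Derivation R (MvPolynomial (Fin n) R) (MvPolynomial (Fin n) R)) :
    lsmul D E - lsmul E D = ⁅D, E⁆ := by
  apply MvPolynomial.derivation_ext
  intro i
  simp [lsmul, MvPolynomial.mkDerivation_X, Derivation.commutator_apply]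

/-- The product `⋆` satisfies the left-symmetric identity. -/
theorem lsmul_left_symmetric (R : Type*) [CommRing R] (n : ℕ)
    (D E F : Derivation R (MvPolynomial (Fin n) R) (MvPolynomial (Fin n) R)) :
    lsmul (lsmul D E) F - lsmul D (lsmul E F) =
      lsmul (lsmul E D) F - lsmul E (lsmul D F) := by
  apply MvPolynomial.derivation_ext
  intro i
  simp only [Derivation.sub_apply, lsmul, MvPolynomial.mkDerivation_X]
  have h := congrArg (fun G : Derivation R (MvPolynomial (Fin n) R) (MvPolynomial (Fin n) R) =>
    G (F (MvPolynomial.X i))) (lsmul_sub_lsmul_eq D E)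
  simp only [Derivation.sub_apply, Derivation.commutator_apply, lsmul,
    MvPolynomial.mkDerivation_X] at h
  linear_combination h
end

section
/- For any commutative ring R, any n : ℕ, and any derivation D of A = MvPolynomial (Fin n) R, D is locally nilpotent (for every f ∈ A there exists p with D^[p](f) = 0, where D^[p] is the p-fold iterate of D) if and only if D is a left nilpotent element of the left-symmetric algebra of derivations, i.e., there exists m ≥ 2 with D^{(m)} = 0, where D^{(1)} = D and D^{(r+1)} = D ⋆ D^{(r)}. -/
/-- Left powers: `leftPow D 1 = D`, `leftPow D (r+1) = D ⋆ leftPow D r`. -/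
noncomputable def leftPow {R : Type*} [CommRing R] {n : ℕ}
    (D : Derivation R (MvPolynomial (Fin n) R) (MvPolynomial (Fin n) R)) :
    ℕ → Derivation R (MvPolynomial (Fin n) R) (MvPolynomial (Fin n) R)
  | 0 => 0
  | 1 => D
  | (r + 2) => lsmul D (leftPow D (r + 1))

section Aux

variable {R A : Type*} [CommRing R] [CommRing A] [Algebra R A]

lemma iter_add (D : Derivation R A A) (a b : A) (k : ℕ) :
    (⇑D)^[k] (a + b) = (⇑D)^[k] a + (⇑D)^[k] b := by
  induction k generalizing a b with
  | zero => simp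
  | succ k ih => simp [Function.iterate_succ_apply, map_add, ih]

lemma iter_stable (D : Derivation R A A) (a : A) {p k : ℕ} (h : (⇑D)^[p] a = 0)
    (hk : p ≤ k) : (⇑D)^[k] a = 0 := by
  obtain ⟨j, rfl⟩ := Nat.exists_eq_add_of_le hk
  rw [add_comm, Function.iterate_add_apply, h]
  exact Function.iterate_fixed (map_zero D) j

lemma iter_mul_key (D : Derivation R A A) :
    ∀ (m : ℕ) (a b : A), (∀ k ≤ m, (⇑D)^[k] a = 0 ∨ (⇑D)^[m - k] b = 0) →
      (⇑D)^[m] (a * b) = 0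
  | 0, a, b, h => by
      rcases h 0 le_rfl with h0 | h0 <;> simp_all
  | m + 1, a, b, h => by
      have : (⇑D)^[m + 1] (a * b) = (⇑D)^[m] (a * D b) + (⇑D)^[m] (D a * b) := by
        rw [Function.iterate_succ_apply, Derivation.leibniz, smul_eq_mul, smul_eq_mul,
          iter_add]
        ring_nf
      rw [this]
      have h1 : (⇑D)^[m] (a * D b) = 0 := by
        refine iter_mul_key D m a (D b) fun k hk => ?_
        rcases h k (hk.trans (Nat.le_succ m)) with h0 | h0
        · exact Or.inl h0
        · right
          rwa [Nat.succ_sub hk, Function.iterate_succ_apply] at h0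
      have h2 : (⇑D)^[m] (D a * b) = 0 := by
        refine iter_mul_key D m (D a) b fun k hk => ?_
        rcases h (k + 1) (Nat.succ_le_succ hk) with h0 | h0
        · left
          rwa [Function.iterate_succ_apply] at h0
        · right
          rwa [Nat.succ_sub_succ] at h0
      rw [h1, h2, add_zero]

lemma iter_mul_nilp (D : Derivation R A A) {a b : A} {p q : ℕ}
    (ha : (⇑D)^[p] a = 0) (hb : (⇑D)^[q] b = 0) : (⇑D)^[p + q] (a * b) = 0 := by
  refine iter_mul_key D (p + q) a b fun k hk => ?_
  rcases le_or_gt p k with h | h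
  · exact Or.inl (iter_stable D a ha h)
  · exact Or.inr (iter_stable D b hb (by omega))

end Aux

lemma leftPow_X {R : Type*} [CommRing R] {n : ℕ}
    (D : Derivation R (MvPolynomial (Fin n) R) (MvPolynomial (Fin n) R)) (i : Fin n) :
    ∀ m : ℕ, leftPow D (m + 1) (MvPolynomial.X i) = (⇑D)^[m + 1] (MvPolynomial.X i)
  | 0 => by simp [leftPow]
  | m + 1 => by
      show lsmul D (leftPow D (m + 1)) (MvPolynomial.X i) = _
      rw [lsmul, MvPolynomial.mkDerivation_X, leftPow_X D i m]
      exact (Function.iterate_succ_apply' (⇑D) (m + 1) _).symm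

/-- A derivation of the polynomial algebra is locally nilpotent if and only if it is a
left nilpotent element of the left-symmetric algebra of derivations. -/
theorem locallyNilpotent_iff_left_nilpotent (R : Type*) [CommRing R] (n : ℕ)
    (D : Derivation R (MvPolynomial (Fin n) R) (MvPolynomial (Fin n) R)) :
    (∀ f : MvPolynomial (Fin n) R, ∃ p : ℕ, (⇑D)^[p] f = 0) ↔
      (∃ m : ℕ, 2 ≤ m ∧ leftPow D m = 0) := by
  constructor
  · intro h
    choose p hp using fun i : Fin n => h (MvPolynomial.X i)
    refine ⟨Finset.univ.sup p + 2, by omega, MvPolynomial.derivation_ext fun i => ?_⟩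
    show leftPow D (Finset.univ.sup p + 1 + 1) (MvPolynomial.X i) = 0
    rw [leftPow_X]
    exact iter_stable D _ (hp i) (by
      have := Finset.le_sup (f := p) (Finset.mem_univ i); omega)
  · rintro ⟨m, hm, hD⟩
    obtain ⟨k, rfl⟩ : ∃ k, m = k + 1 := ⟨m - 1, by omega⟩
    have hX : ∀ i : Fin n, (⇑D)^[k + 1] (MvPolynomial.X i) = 0 := by
      intro i
      rw [← leftPow_X, hD]
      rfl
    intro f
    induction f using MvPolynomial.induction_on with
    | C a =>
        exact ⟨1, by simp [MvPolynomial.C_eq_smul_one]⟩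
    | add f g hf hg =>
        obtain ⟨pf, hpf⟩ := hf
        obtain ⟨pg, hpg⟩ := hg
        exact ⟨max pf pg, by
          rw [iter_add, iter_stable D f hpf (le_max_left _ _),
            iter_stable D g hpg (le_max_right _ _), add_zero]⟩
    | mul_X f i hf =>
        obtain ⟨pf, hpf⟩ := hf
        exact ⟨pf + (k + 1), iter_mul_nilp D hpf (hX i)⟩
end

section
/- For any commutative ring R, any n : ℕ, and any derivation D of A = MvPolynomial (Fin n) R: if the Jacobian matrix J(D) is nilpotent, say J(D)^m = 0, then the right multiplication operator by D is nilpotent, i.e., for every derivation E of A, the m-fold right product (((E ⋆ D) ⋆ D) ⋆ ⋯ ) ⋆ D (with m factors of D) equals 0. -/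
/-- The Jacobian matrix of a derivation: `jac D j i = ∂ᵢ (D (X j))`. -/
noncomputable def jac {R : Type*} [CommRing R] {n : ℕ}
    (D : Derivation R (MvPolynomial (Fin n) R) (MvPolynomial (Fin n) R)) :
    Matrix (Fin n) (Fin n) (MvPolynomial (Fin n) R) :=
  Matrix.of fun j i => MvPolynomial.pderiv i (D (MvPolynomial.X j))

/-- Iterated right multiplication by `D`: `rIter E D m = (((E ⋆ D) ⋆ D) ⋆ ⋯) ⋆ D`
with `m` factors of `D`. -/
noncomputable def rIter {R : Type*} [CommRing R] {n : ℕ}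
    (E D : Derivation R (MvPolynomial (Fin n) R) (MvPolynomial (Fin n) R)) :
    ℕ → Derivation R (MvPolynomial (Fin n) R) (MvPolynomial (Fin n) R)
  | 0 => E
  | (m + 1) => lsmul (rIter E D m) D

/-! By the chain rule, on the vector of values `(F (X j))ⱼ` the operation `F ↦ F ⋆ D` acts as
multiplication by `J(D)`; so `m` right multiplications act as `J(D)^m`, which kills every `E`
since a derivation is determined by its values on the variables. -/

theorem Derivation.sum_apply {R A M ι : Type*} [CommSemiring R] [CommSemiring A] [Algebra R A]
    [AddCommMonoid M] [Module A M] [Module R M]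
    (s : Finset ι) (f : ι → Derivation R A M) (a : A) :
    (∑ i ∈ s, f i) a = ∑ i ∈ s, f i a := by
  rw [← Derivation.coeFnAddMonoidHom_apply, map_sum, Finset.sum_apply]
  rfl

namespace MvPolynomial

variable {R σ : Type*} [CommSemiring R] [Fintype σ]

theorem derivation_eq_sum_smul_pderiv (F : Derivation R (MvPolynomial σ R) (MvPolynomial σ R)) :
    F = ∑ j, F (X j) • pderiv j := by
  classical
  refine derivation_ext fun i => ?_
  simp [Derivation.sum_apply, pderiv_X, Pi.single_apply]

theorem derivation_apply_eq_sum_pderiv_mul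
    (F : Derivation R (MvPolynomial σ R) (MvPolynomial σ R)) (p : MvPolynomial σ R) :
    F p = ∑ j, pderiv j p * F (X j) := by
  conv_lhs => rw [derivation_eq_sum_smul_pderiv F]
  simp [Derivation.sum_apply, mul_comm]

end MvPolynomial

open MvPolynomial Matrix

section

variable {R : Type*} [CommRing R] {n : ℕ}

theorem lsmul_X_eq_jac_mulVec
    (F D : Derivation R (MvPolynomial (Fin n) R) (MvPolynomial (Fin n) R)) :
    (fun i => lsmul F D (X i)) = jac D *ᵥ fun j => F (X j) := by
  ext i
  simp only [lsmul, mkDerivation_X, derivation_apply_eq_sum_pderiv_mul F (D (X i)),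
    mulVec, dotProduct, jac, of_apply]

theorem rIter_X_eq_jac_pow_mulVec
    (E D : Derivation R (MvPolynomial (Fin n) R) (MvPolynomial (Fin n) R)) (m : ℕ) :
    (fun i => rIter E D m (X i)) = (jac D ^ m) *ᵥ fun j => E (X j) := by
  induction m with
  | zero => simp [rIter]
  | succ m ih => rw [rIter, lsmul_X_eq_jac_mulVec, ih, mulVec_mulVec, pow_succ']

end

/-- If the Jacobian matrix of `D` is nilpotent, say `J(D)^m = 0`, then the right
multiplication operator by `D` is nilpotent: the `m`-fold right product of any `E`
by `D` vanishes. -/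
theorem rightMul_nilpotent_of_jac_pow_eq_zero (R : Type*) [CommRing R] (n : ℕ)
    (D : Derivation R (MvPolynomial (Fin n) R) (MvPolynomial (Fin n) R))
    (m : ℕ) (h : jac D ^ m = 0)
    (E : Derivation R (MvPolynomial (Fin n) R) (MvPolynomial (Fin n) R)) :
    rIter E D m = 0 := by
  refine derivation_ext fun i => ?_
  simpa [h] using congrFun (rIter_X_eq_jac_pow_mulVec E D m) i
end

section
/- For any commutative ring R, any n : ℕ, any derivation D of A = MvPolynomial (Fin n) R, and any m ≥ 1: J(D)^m = 0 if and only if for every derivation E of A the m-fold right product (((E ⋆ D) ⋆ D) ⋆ ⋯ ) ⋆ D (with m factors of D) equals 0. In particular, for polynomial algebras the Jacobian matrix of D is nilpotent if and only if the right multiplication operator by D is nilpotent. -/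
open MvPolynomial

/-- Every derivation of a polynomial ring is given by the chain rule. -/
lemma deriv_eq_sum {R : Type*} [CommRing R] {n : ℕ}
    (E : Derivation R (MvPolynomial (Fin n) R) (MvPolynomial (Fin n) R))
    (f : MvPolynomial (Fin n) R) :
    E f = ∑ i, pderiv i f * E (X i) := by
  have h : E = ∑ i, E (X i) • (pderiv i :
      Derivation R (MvPolynomial (Fin n) R) (MvPolynomial (Fin n) R)) := by
    apply MvPolynomial.derivation_ext
    intro j
    rw [show ⇑(∑ i, E (X i) • (pderiv i : Derivation R (MvPolynomial (Fin n) R)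
        (MvPolynomial (Fin n) R))) = ∑ i, ⇑(E (X i) • (pderiv i : Derivation R
        (MvPolynomial (Fin n) R) (MvPolynomial (Fin n) R)))
      from map_sum Derivation.coeFnAddMonoidHom _ _]
    simp [Finset.sum_apply, Derivation.smul_apply, pderiv_X, Pi.single_apply]
  conv_lhs => rw [h]
  rw [show ⇑(∑ i, E (X i) • (pderiv i : Derivation R (MvPolynomial (Fin n) R)
      (MvPolynomial (Fin n) R))) = ∑ i, ⇑(E (X i) • (pderiv i : Derivation R
      (MvPolynomial (Fin n) R) (MvPolynomial (Fin n) R)))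
    from map_sum Derivation.coeFnAddMonoidHom _ _]
  simp [Finset.sum_apply, Derivation.smul_apply, mul_comm]

lemma rIter_X {R : Type*} [CommRing R] {n : ℕ}
    (E D : Derivation R (MvPolynomial (Fin n) R) (MvPolynomial (Fin n) R))
    (m : ℕ) (j : Fin n) :
    rIter E D m (X j) = (jac D ^ m).mulVec (fun i => E (X i)) j := by
  induction m generalizing j with
  | zero => simp [rIter, Matrix.one_mulVec]
  | succ m ih =>
    have h1 : rIter E D (m + 1) (X j) = rIter E D m (D (X j)) := by
      show lsmul (rIter E D m) D (X j) = _
      unfold lsmul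
      rw [mkDerivation_X]
    rw [h1, deriv_eq_sum (rIter E D m) (D (X j))]
    simp only [ih]
    rw [pow_succ', ← Matrix.mulVec_mulVec]
    simp [Matrix.mulVec, dotProduct, jac, mul_comm]

/-- For polynomial algebras, `J(D)^m = 0` if and only if the `m`-fold right product
of every derivation `E` by `D` vanishes; in particular the Jacobian matrix of `D`
is nilpotent iff the right multiplication operator by `D` is nilpotent. -/
theorem jac_pow_eq_zero_iff_rightMul (R : Type*) [CommRing R] (n : ℕ)
    (D : Derivation R (MvPolynomial (Fin n) R) (MvPolynomial (Fin n) R))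
    (m : ℕ) (hm : 1 ≤ m) :
    jac D ^ m = 0 ↔
      ∀ E : Derivation R (MvPolynomial (Fin n) R) (MvPolynomial (Fin n) R),
        rIter E D m = 0 := by
  constructor
  · intro h E
    apply MvPolynomial.derivation_ext
    intro j
    rw [rIter_X, h]
    simp [Matrix.zero_mulVec]
  · intro h
    refine Matrix.ext fun j k => ?_
    classical
    have hE := h (MvPolynomial.mkDerivation R (fun i => if i = k then 1 else 0))
    have h2 := congrArg (fun (F : Derivation R (MvPolynomial (Fin n) R)
      (MvPolynomial (Fin n) R)) => F (X j)) hE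
    simp only [rIter_X, Derivation.zero_apply] at h2
    simp only [Matrix.mulVec, dotProduct, mkDerivation_X] at h2
    simp only [Matrix.zero_apply]
    simpa [Finset.sum_ite_eq] using h2
end

section
/- Let k be a field of characteristic 0 and for each n : ℕ let e_n be the derivation of k[X] with e_n(X) = X^{n+1}. Then the positive part of the left-symmetric Witt algebra ℒ₁ is generated by e₁: for every k-submodule S of the derivations of k[X] that contains e₁ and is closed under ⋆ (i.e., u ∈ S and v ∈ S imply u ⋆ v ∈ S), one has e_n ∈ S for all n ≥ 1. -/
/-- The left-symmetric product on derivations of `k[X]`: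
`D ⋆ E` is the unique derivation with `(D ⋆ E) X = D (E X)`. -/
noncomputable def pstar {k : Type*} [CommRing k]
    (D E : Derivation k (Polynomial k) (Polynomial k)) :
    Derivation k (Polynomial k) (Polynomial k) :=
  Polynomial.mkDerivation k (D (E Polynomial.X))

/-- The standard basis of the left-symmetric Witt algebra `ℒ₁`:
`eW n` is the derivation with `eW n X = X ^ (n + 1)`. -/
noncomputable def eW (k : Type*) [CommRing k] (n : ℕ) :
    Derivation k (Polynomial k) (Polynomial k) :=
  Polynomial.mkDerivation k (Polynomial.X ^ (n + 1))

/-- `e₁ ⋆ eₙ = (n+1) • e_{n+1}`. -/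
lemma pstar_eW_one_eW (k : Type*) [CommRing k] (n : ℕ) :
    pstar (eW k 1) (eW k n) = ((n+1 : ℕ) : k) • eW k (n+1) := by
  apply Polynomial.derivation_ext
  simp [pstar, eW, Polynomial.mkDerivation_X, Derivation.leibniz_pow,
    Polynomial.smul_eq_C_mul, Polynomial.C_eq_natCast]
  ring

/-- The positive part of the left-symmetric Witt algebra `ℒ₁` is generated by `e₁`:
any `k`-submodule of derivations of `k[X]` containing `e₁` and closed under `⋆`
contains all `eₙ`, `n ≥ 1`. -/
theorem positive_part_generated_by_e_one (k : Type*) [Field k] [CharZero k]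
    (S : Submodule k (Derivation k (Polynomial k) (Polynomial k)))
    (h1 : eW k 1 ∈ S)
    (hmul : ∀ u v, u ∈ S → v ∈ S → pstar u v ∈ S) :
    ∀ n : ℕ, 1 ≤ n → eW k n ∈ S := by
  intro n hn
  induction n with
  | zero => omega
  | succ m ih =>
    rcases Nat.eq_or_lt_of_le hn with h | h
    · simpa [← h] using h1
    · have hm : eW k m ∈ S := ih (by omega)
      have hs := hmul _ _ h1 hm
      rw [pstar_eW_one_eW] at hs
      have hne : ((m+1 : ℕ) : k) ≠ 0 := Nat.cast_ne_zero.mpr (by omega)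
      have := S.smul_mem (((m+1 : ℕ) : k))⁻¹ hs
      rwa [inv_smul_smul₀ hne] at this
end

section
/- Let k be a field of characteristic 0 and let A be a (not necessarily associative or unital) commutative k-algebra satisfying the identity x * (x * x) = 0 for all x ∈ A. Then A also satisfies (x * x) * (x * x) = 0 for all x ∈ A; consequently every one-generated subalgebra of A is spanned by a and a * a, and is nilpotent. -/
/-- Let `A` be a commutative (not necessarily associative or unital) algebra over a field
of characteristic `0` satisfying `x * (x * x) = 0`. Then `(x * x) * (x * x) = 0`;
consequently, for every `a`, the span of `{a, a * a}` is closed under multiplication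
(so the subalgebra generated by `a` is spanned by `a` and `a * a`) and all triple
products of its elements vanish (so it is nilpotent). -/
theorem engel2_structure (k : Type*) [Field k] [CharZero k]
    (A : Type*) [AddCommGroup A] [Module k A]
    (mul : A →ₗ[k] A →ₗ[k] A)
    (hcomm : ∀ x y : A, mul x y = mul y x)
    (hengel : ∀ x : A, mul x (mul x x) = 0) :
    (∀ x : A, mul (mul x x) (mul x x) = 0) ∧
    ∀ a : A,
      (∀ x ∈ Submodule.span k {a, mul a a}, ∀ y ∈ Submodule.span k {a, mul a a},
          mul x y ∈ Submodule.span k {a, mul a a}) ∧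
      (∀ x ∈ Submodule.span k {a, mul a a}, ∀ y ∈ Submodule.span k {a, mul a a},
          ∀ z ∈ Submodule.span k {a, mul a a}, mul (mul x y) z = 0) := by
  have key : ∀ x : A, mul (mul x x) (mul x x) = 0 := by
    intro x
    have h1 := hengel (x + mul x x)
    have h2 := hengel (x - mul x x)
    simp only [map_add, map_sub, map_neg, LinearMap.add_apply, LinearMap.sub_apply,
      LinearMap.neg_apply, hcomm (mul x x) x, hengel, map_zero, LinearMap.zero_apply,
      neg_zero, add_zero, zero_add, sub_zero, zero_sub, neg_neg] at h1 h2
    have h3 : (2 : k) • mul (mul x x) (mul x x) = 0 := by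
      rw [two_smul]
      have := congrArg₂ (· - ·) h1 h2
      simpa using this
    rcases smul_eq_zero.mp h3 with h | h
    · exact absurd h two_ne_zero
    · exact h
  refine ⟨key, fun a => ?_⟩
  set S : Submodule k A := Submodule.span k {a, mul a a} with hS
  have hca : mul (mul a a) a = 0 := (hcomm (mul a a) a).trans (hengel a)
  -- multiplication by a * a kills everything in S
  have L1 : ∀ z ∈ S, mul (mul a a) z = 0 := by
    intro z hz
    induction hz using Submodule.span_induction with
    | mem x h =>
      rcases h with h | h
      · subst h; exact hca
      · simp at h; subst h; exact key a
    | zero => simp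
    | add x y hx hy ihx ihy => simp [ihx, ihy]
    | smul c x hx ihx => simp [ihx]
  -- multiplication by a maps S into span of {a * a}
  have L2 : ∀ z ∈ S, mul a z ∈ Submodule.span k {mul a a} := by
    intro z hz
    induction hz using Submodule.span_induction with
    | mem x h =>
      rcases h with h | h
      · subst h; exact Submodule.mem_span_singleton_self _
      · simp at h; subst h; rw [hengel a]; exact Submodule.zero_mem _
    | zero => simp
    | add x y hx hy ihx ihy => simpa using Submodule.add_mem _ ihx ihy
    | smul c x hx ihx => simpa using Submodule.smul_mem _ c ihx
  -- products of elements of S land in span of {a * a}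
  have L3 : ∀ x ∈ S, ∀ y ∈ S, mul x y ∈ Submodule.span k {mul a a} := by
    intro x hx y hy
    induction hx using Submodule.span_induction with
    | mem u h =>
      rcases h with h | h
      · subst h; exact L2 y hy
      · simp at h; subst h; rw [L1 y hy]; exact Submodule.zero_mem _
    | zero => simp
    | add u v hu hv ihu ihv => simpa using Submodule.add_mem _ ihu ihv
    | smul c u hu ihu => simpa using Submodule.smul_mem _ c ihu
  have hsub : Submodule.span k {mul a a} ≤ S :=
    Submodule.span_mono (by intro t ht; simp at ht; subst ht; simp)
  constructor
  · intro x hx y hy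
    exact hsub (L3 x hx y hy)
  · intro x hx y hy z hz
    obtain ⟨r, hr⟩ := Submodule.mem_span_singleton.mp (L3 x hx y hy)
    rw [← hr]
    simp [L1 z hz]
end

section
/- Let k be a field of characteristic 0 and let A be a (not necessarily associative or unital) commutative k-algebra satisfying the identity x * (x * (x * x)) = 0 for all x ∈ A. Then for every a ∈ A the following identities hold (products written right-normed, a² := a * a): a² * (a * a²) = -(a * (a² * a²)); a² * (a² * a²) = a * (a * (a² * a²)); (a * a²) * (a * a²) = a * (a * (a² * a²)); a * (a * (a * (a² * a²))) = 0; a² * (a * (a² * a²)) = 0; and (a * a²) * (a² * a²) = 0. -/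
private lemma engel3_smul_cancel (k : Type*) {A : Type*} [Field k] [CharZero k]
    [AddCommGroup A] [Module k A] (n : ℕ) (hn : n ≠ 0) {x : A} (h : n • x = 0) : x = 0 := by
  have h' : (n : k) • x = 0 := by rw [Nat.cast_smul_eq_nsmul, h]
  rcases smul_eq_zero.mp h' with h'' | h''
  · exact absurd (Nat.cast_eq_zero.mp h'') hn
  · exact h''

private lemma engel3_L2 {k : Type*} [Field k] [CharZero k] {A : Type*} [AddCommGroup A]
    [Module k A] (mul : A →ₗ[k] A →ₗ[k] A) (hcomm : ∀ x y : A, mul x y = mul y x)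
    (hengel : ∀ x : A, mul x (mul x (mul x x)) = 0) (a b : A) :
    mul b (mul b (mul a a)) + 2 • mul b (mul a (mul a b)) + 2 • mul a (mul b (mul a b))
      + mul a (mul a (mul b b)) = 0 := by
  have e1 := hengel (a + b)
  have e2 := hengel (a - b)
  simp only [map_add, map_sub, LinearMap.add_apply, LinearMap.sub_apply, hcomm b a,
    hengel a, hengel b, add_zero, zero_add] at e1 e2
  have e := congrArg₂ (· + ·) e1 e2
  simp only [add_zero] at e
  refine engel3_smul_cancel k 2 (by norm_num) ?_
  rw [← e]; abel

private lemma engel3_L13 {k : Type*} [Field k] [CharZero k] {A : Type*} [AddCommGroup A]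
    [Module k A] (mul : A →ₗ[k] A →ₗ[k] A) (hcomm : ∀ x y : A, mul x y = mul y x)
    (hengel : ∀ x : A, mul x (mul x (mul x x)) = 0) (a b : A) :
    (mul b (mul a (mul a a)) + mul a (mul b (mul a a)) + 2 • mul a (mul a (mul a b)) = 0) ∧
    (2 • mul b (mul b (mul a b)) + mul b (mul a (mul b b)) + mul a (mul b (mul b b)) = 0) := by
  have e1 := hengel (a + b)
  have e3 := hengel (a + (b + b))
  simp only [map_add, map_sub, LinearMap.add_apply, LinearMap.sub_apply, hcomm b a,
    hengel a, hengel b, add_zero, zero_add] at e1 e3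
  have hL2 := engel3_L2 mul hcomm hengel a b
  have h4 : (4:ℕ) • (mul b (mul b (mul a a)) + 2 • mul b (mul a (mul a b))
      + 2 • mul a (mul b (mul a b)) + mul a (mul a (mul b b))) = 0 := by
    rw [hL2, smul_zero]
  have key : mul b (mul a (mul a a)) + mul a (mul b (mul a a)) + 2 • mul a (mul a (mul a b))
      + (2 • mul b (mul b (mul a b)) + mul b (mul a (mul b b)) + mul a (mul b (mul b b))) = 0 := by
    have e := congrArg₂ (· - ·) e1 hL2
    simp only [sub_zero] at e
    rw [← e]; abel
  have key2 : 2 • (mul b (mul a (mul a a)) + mul a (mul b (mul a a)) + 2 • mul a (mul a (mul a b)))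
      + 8 • (2 • mul b (mul b (mul a b)) + mul b (mul a (mul b b)) + mul a (mul b (mul b b))) = 0 := by
    have e := congrArg₂ (· - ·) e3 h4
    simp only [sub_zero] at e
    rw [← e]; abel
  have h3 : (2 • mul b (mul b (mul a b)) + mul b (mul a (mul b b)) + mul a (mul b (mul b b))) = 0 := by
    refine engel3_smul_cancel k 6 (by norm_num) ?_
    have e := congrArg₂ (fun x y => x - 2 • y) key2 key
    simp only [smul_zero, sub_zero] at e
    rw [← e]; abel
  refine ⟨?_, h3⟩
  have e := congrArg₂ (· - ·) key h3
  simp only [sub_zero] at e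
  rw [← e]; abel

private lemma engel3_M {k : Type*} [Field k] [CharZero k] {A : Type*} [AddCommGroup A]
    [Module k A] (mul : A →ₗ[k] A →ₗ[k] A) (hcomm : ∀ x y : A, mul x y = mul y x)
    (hengel : ∀ x : A, mul x (mul x (mul x x)) = 0) (a b d : A) :
    mul b (mul d (mul a a)) + mul d (mul b (mul a a))
      + 2 • mul b (mul a (mul a d)) + 2 • mul d (mul a (mul a b))
      + 2 • mul a (mul b (mul a d)) + 2 • mul a (mul d (mul a b))
      + mul a (mul a (mul b d)) + mul a (mul a (mul d b)) = 0 := by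
  have E := engel3_L2 mul hcomm hengel a (b + d)
  have Eb := engel3_L2 mul hcomm hengel a b
  have Ed := engel3_L2 mul hcomm hengel a d
  simp only [map_add, LinearMap.add_apply, smul_add] at E
  have e := congrArg₂ (· - ·) (congrArg₂ (· - ·) E Eb) Ed
  simp only [sub_zero] at e
  rw [← e]; abel

/-- Let `A` be a commutative (not necessarily associative or unital) algebra over a field
of characteristic `0` satisfying `x * (x * (x * x)) = 0`. Then the following right-normed
identities hold (writing `a² = a * a`):
`a² * (a * a²) = -(a * (a² * a²))`, `a² * (a² * a²) = a * (a * (a² * a²))`,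
`(a * a²) * (a * a²) = a * (a * (a² * a²))`, `a * (a * (a * (a² * a²))) = 0`,
`a² * (a * (a² * a²)) = 0`, and `(a * a²) * (a² * a²) = 0`. -/
theorem engel3_identities (k : Type*) [Field k] [CharZero k]
    (A : Type*) [AddCommGroup A] [Module k A]
    (mul : A →ₗ[k] A →ₗ[k] A)
    (hcomm : ∀ x y : A, mul x y = mul y x)
    (hengel : ∀ x : A, mul x (mul x (mul x x)) = 0) :
    ∀ a : A,
      (mul (mul a a) (mul a (mul a a)) = -(mul a (mul (mul a a) (mul a a)))) ∧
      (mul (mul a a) (mul (mul a a) (mul a a)) =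
        mul a (mul a (mul (mul a a) (mul a a)))) ∧
      (mul (mul a (mul a a)) (mul a (mul a a)) =
        mul a (mul a (mul (mul a a) (mul a a)))) ∧
      (mul a (mul a (mul a (mul (mul a a) (mul a a)))) = 0) ∧
      (mul (mul a a) (mul a (mul (mul a a) (mul a a))) = 0) ∧
      (mul (mul a (mul a a)) (mul (mul a a) (mul a a)) = 0) := by
  intro a
  have h0 := hengel a
  have I1 := (engel3_L13 mul hcomm hengel a (mul a a)).1
  have I2 := (engel3_L13 mul hcomm hengel a (mul a (mul a a))).1
  have I3 := engel3_L2 mul hcomm hengel a (mul a a)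
  have I4 := (engel3_L13 mul hcomm hengel a (mul (mul a a) (mul a a))).1
  have I5 := (engel3_L13 mul hcomm hengel a (mul a a)).2
  have I6 := engel3_M mul hcomm hengel a (mul a a) (mul a (mul a a))
  simp only [h0, map_zero, smul_zero, add_zero, zero_add] at I1 I2 I3 I4 I5 I6
  -- identity 1 : s*c = -(a*Q)
  have id1 : mul (mul a a) (mul a (mul a a)) = -(mul a (mul (mul a a) (mul a a))) :=
    eq_neg_of_add_eq_zero_left I1
  -- identity 3 : c*c = a*(a*Q)
  rw [hcomm (mul a (mul a a)) (mul a a), id1, map_neg] at I2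
  have id3 : mul (mul a (mul a a)) (mul a (mul a a)) =
      mul a (mul a (mul (mul a a) (mul a a))) := add_neg_eq_zero.mp I2
  -- identity 2 : s*Q = a*(a*Q)
  rw [id1, map_neg] at I3
  have id2 : mul (mul a a) (mul (mul a a) (mul a a)) =
      mul a (mul a (mul (mul a a) (mul a a))) := by
    rw [← sub_eq_zero, ← I3]; abel
  -- I4 : c*Q + 3 Y1 = 0
  rw [hcomm (mul (mul a a) (mul a a)) (mul a (mul a a)),
      hcomm (mul (mul a a) (mul a a)) (mul a a), id2] at I4
  -- I5 : -2 Y2 + Y2 + Y1 = 0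
  rw [id1, map_neg, id2] at I5
  -- I6 : -Y2 + Y3 + 2 Y1 - 2 Y1 = 0
  rw [hcomm (mul a (mul a a)) (mul a a), id1, map_neg, id3] at I6
  simp only [map_neg] at I6
  -- Y1 = 0
  have hY1 : mul a (mul a (mul a (mul (mul a a) (mul a a)))) = 0 := by
    refine engel3_smul_cancel k 4 (by norm_num) ?_
    have e := congrArg₂ (· + ·) (congrArg₂ (· - ·) I4 I6) I5
    simp only [sub_zero, add_zero] at e
    rw [← e]; abel
  -- Y2 = 0
  have hY2 : mul (mul a a) (mul a (mul (mul a a) (mul a a))) = 0 := by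
    rw [← neg_eq_zero, ← I5, hY1]; abel
  -- Y3 = 0
  have hY3 : mul (mul a (mul a a)) (mul (mul a a) (mul a a)) = 0 := by
    rw [← I4, hY1]; abel
  exact ⟨id1, id2, id3, hY1, hY2, hY3⟩
end
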